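/- arXiv:1607.04459 — 2 statements merged into one kernel-verified Lean document; each statement's English description precedes it below -/
import Mathlib

section
/- For every labeled tree t and every choice of processing orders of the children at the nodes, the stack requirement satisfies S(t) ≥ dim(t) + 1. -/
/-- A labeled tree: a node carries a label and a (possibly empty) list of children. -/
inductive LTree (L : Type) : Type where
  | node : L → List (LTree L) → LTree L

namespace LTree

/-- The tree dimension: `0` for a leaf; otherwise the maximum `m` of the children's
dimensions if exactly one child attains `m`, and `m + 1` otherwise. -/
def dim {L : Type} : LTree L → ℕ
  | node _ ts =>
    let ds := ts.attach.map fun x => dim x.1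
    if ds = [] then 0
    else
      let m := ds.foldr max 0
      if ds.count m = 1 then m else m + 1
termination_by t => sizeOf t
decreasing_by
  have := List.sizeOf_lt_of_mem x.2
  simp_wf
  omega

/-- The stack requirement of a tree whose children are processed left-to-right
(i.e. the processing order at each node is the order of the children list):
`S(t) = 1` for a leaf, and `S(t) = max_{1 ≤ j ≤ r} (S(t_j) + (r − j))` otherwise
(here realised with 0-based indices, so the summand is `r - 1 - j`). -/
def stackReq {L : Type} : LTree L → ℕ
  | node _ ts =>
    if ts.isEmpty then 1
    else (ts.attach.zipIdx.map fun p => stackReq p.1.1 + (ts.length - 1 - p.2)).foldr max 0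
termination_by t => sizeOf t
decreasing_by
  have := List.sizeOf_lt_of_mem p.1.2
  simp_wf
  omega

/-- `Reorder t t'` : the tree `t'` arises from `t` by choosing, at every node of `t`,
a processing order of the children (a permutation) and listing the children in that
order.  The stack requirement of `t` under such a choice of processing orders is
exactly `stackReq t'`. -/
inductive Reorder {L : Type} : LTree L → LTree L → Prop
  | node (c : L) (ts us vs : List (LTree L)) :
      List.Forall₂ Reorder ts us → us.Perm vs → Reorder (node c ts) (node c vs)

end LTree

/-!
The dimension of a node depends only on the multiset of its children's dimensions, so it is
unchanged by reordering children, and it suffices to bound the stack requirement for the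
left-to-right order. Let `m` be the largest dimension of a child. If only one child `a` attains
it, then `S(t) ≥ S(a) ≥ m + 1`. If two children attain it, the first of them is not processed
last, so at least one sibling still lies on the stack below it and `S(t) ≥ S(a) + 1 ≥ m + 2`.
-/

theorem List.mem_dropLast_of_two_le_count {α : Type*} [BEq α] [LawfulBEq α] {l : List α}
    {a : α} (h : 2 ≤ l.count a) : a ∈ l.dropLast := by
  have hne : l ≠ [] := by rintro rfl; simp at h
  rw [← l.dropLast_append_getLast hne, List.count_append] at h
  have : [l.getLast hne].count a ≤ 1 := List.count_le_length.trans (by simp)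
  exact List.count_pos_iff.mp (by omega)

namespace LTree

def nodeDim (ds : List ℕ) : ℕ :=
  if ds = [] then 0
  else if ds.count (ds.foldr max 0) = 1 then ds.foldr max 0 else ds.foldr max 0 + 1

theorem nodeDim_perm {ds ds' : List ℕ} (h : ds.Perm ds') : nodeDim ds = nodeDim ds' := by
  have hnil : ds = [] ↔ ds' = [] := by simp only [← List.length_eq_zero_iff, h.length_eq]
  simp only [nodeDim, h.foldr_eq 0, h.count_eq, hnil]

theorem dim_node {L : Type} (c : L) (ts : List (LTree L)) :
    dim (node c ts) = nodeDim (ts.map dim) := by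
  rw [dim, List.attach_map_val]
  rfl

theorem le_stackReq_node {L : Type} (c : L) (ts : List (LTree L)) (j : ℕ) (hj : j < ts.length) :
    stackReq ts[j] + (ts.length - 1 - j) ≤ stackReq (node c ts) := by
  have hne : ts.isEmpty = false := by
    rw [List.isEmpty_eq_false_iff]; rintro rfl; simp at hj
  rw [stackReq, if_neg (by simp [hne])]
  refine List.le_max_of_le' 0 (List.mem_map.2 ⟨(ts.attach[j]'(by simpa using hj), j), ?_, rfl⟩) ?_
  · exact List.mem_zipIdx_iff_getElem?.2 (List.getElem?_eq_getElem _)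
  · simp

theorem stackReq_le_of_mem {L : Type} (c : L) {ts : List (LTree L)} {a : LTree L} (ha : a ∈ ts) :
    stackReq a ≤ stackReq (node c ts) := by
  obtain ⟨j, hj, rfl⟩ := List.mem_iff_getElem.1 ha
  exact (Nat.le_add_right _ _).trans (le_stackReq_node c ts j hj)

theorem stackReq_lt_of_mem_dropLast {L : Type} (c : L) {ts : List (LTree L)} {a : LTree L}
    (ha : a ∈ ts.dropLast) : stackReq a < stackReq (node c ts) := by
  obtain ⟨j, hj, rfl⟩ := List.mem_iff_getElem.1 ha
  have hj' : j < ts.length - 1 := by simpa using hj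
  rw [List.getElem_dropLast]
  have := le_stackReq_node c ts j (by omega)
  omega

theorem dim_add_one_le_stackReq {L : Type} : ∀ t : LTree L, dim t + 1 ≤ stackReq t
  | node c ts => by
    have ih : ∀ a ∈ ts, dim a + 1 ≤ stackReq a := fun a _ => dim_add_one_le_stackReq a
    rw [dim_node, nodeDim]
    set m := (ts.map dim).foldr max 0
    have hm (hnil : ts.map dim ≠ []) : m ∈ ts.map dim :=
      List.maximum_mem (List.foldr_max_of_ne_nil hnil).symm
    split_ifs with hnil hunique
    · simp_all [stackReq]
    · obtain ⟨a, ha, hda⟩ := List.mem_map.1 (hm hnil)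
      have := ih a ha
      have := stackReq_le_of_mem c ha
      omega
    · have hdup : 2 ≤ (ts.map dim).count m := by
        have := List.count_pos_iff.2 (hm hnil)
        omega
      have hm' := List.mem_dropLast_of_two_le_count hdup
      rw [← List.map_dropLast] at hm'
      obtain ⟨a, ha, hda⟩ := List.mem_map.1 hm'
      have := ih a (List.dropLast_subset _ ha)
      have := stackReq_lt_of_mem_dropLast c ha
      omega

theorem Reorder.dim_eq {L : Type} : ∀ {t t' : LTree L}, Reorder t t' → dim t = dim t'
  | _, _, Reorder.node c ts us vs hts hperm => by
    have ih : ∀ a ∈ ts, ∀ b, Reorder a b → dim a = dim b := fun a _ b hab => hab.dim_eq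
    have hmap : ts.map dim = us.map dim := by
      rw [← List.forall₂_eq_eq_eq, List.forall₂_map_left_iff, List.forall₂_map_right_iff]
      exact ((List.forall₂_and_left _ _).2 ⟨ih, hts⟩).imp fun a b h => h.1 b h.2
    rw [dim_node, dim_node, hmap]
    exact nodeDim_perm (hperm.map dim)

end LTree

/-- For every labeled tree `t` and every choice of processing orders of the children
at the nodes, the stack requirement satisfies `S(t) ≥ dim(t) + 1`. -/
theorem dim_lt_stackReq {L : Type} (t t' : LTree L) (h : LTree.Reorder t t') :
    t.dim + 1 ≤ t'.stackReq :=
  h.dim_eq ▸ LTree.dim_add_one_le_stackReq t'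
end

section
/- Let Q be a ground Horn program and k ∈ ℕ. For every derivation tree T for an annotated atom (p^{=d}, a) in Q^{≤k} (0 ≤ d ≤ k), the erasure of T is a derivation tree for (p, a) in Q of dimension exactly d; and for every derivation tree T for (p^{≤d}, a) in Q^{≤k}, the erasure of T is a derivation tree for (p, a) in Q of dimension at most d. -/
/-- A ground atom: a predicate symbol together with an argument tuple. -/
abbrev GAtom (P A : Type) := P × A

/-- A ground Horn rule: a head atom together with a finite list of body atoms. -/
abbrev GRule (P A : Type) := GAtom P A × List (GAtom P A)

/-- An atom is derivable in a ground Horn program `Q` if it is the head of a rule of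
`Q` all of whose body atoms are derivable. -/
inductive Derivable {P A : Type} (Q : Set (GRule P A)) : GAtom P A → Prop
  | intro (r : GRule P A) (hr : r ∈ Q) (hb : ∀ b ∈ r.2, Derivable Q b) :
      Derivable Q r.1

/-- `IsDeriv Q h T` : `T` is a derivation tree for the atom `h` in `Q`: its root label
is a rule `(h, [b₁,…,b_r]) ∈ Q` and its `r` children are derivation trees for
`b₁,…,b_r` in `Q`, respectively. -/
inductive IsDeriv {P A : Type} (Q : Set (GRule P A)) :
    GAtom P A → LTree (GRule P A) → Prop
  | node (r : GRule P A) (ts : List (LTree (GRule P A))) :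
      r ∈ Q → List.Forall₂ (IsDeriv Q) r.2 ts → IsDeriv Q r.1 (.node r ts)

/-- Annotated predicate symbols: `eq p d` stands for `p^{=d}` and `le p d` for `p^{≤d}`. -/
inductive Ann (P : Type) : Type where
  | eq (p : P) (d : ℕ)
  | le (p : P) (d : ℕ)

/-- The at-most-`k`-dimension program `Q^{≤k}` of a ground Horn program `Q`. -/
def kdim {P A : Type} (Q : Set (GRule P A)) (k : ℕ) : Set (GRule (Ann P) A) :=
  { R |
    -- (1) facts
    (∃ p a, ((p, a), ([] : List (GAtom P A))) ∈ Q ∧ R = ((Ann.eq p 0, a), [])) ∨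
    -- (1) linear rules
    (∃ p a q b d, d ≤ k ∧ ((p, a), [(q, b)]) ∈ Q ∧
      R = ((Ann.eq p d, a), [(Ann.eq q d, b)])) ∨
    -- (2a)
    (∃ p a B d j, ((p, a), B) ∈ Q ∧ 1 < B.length ∧ 1 ≤ d ∧ d ≤ k ∧ j < B.length ∧
      R = ((Ann.eq p d, a),
        (B.zipIdx.map Prod.swap).map fun x =>
          (if x.1 = j then Ann.eq x.2.1 d else Ann.le x.2.1 (d - 1), x.2.2))) ∨
    -- (2b)
    (∃ p a B d j₁ j₂, ((p, a), B) ∈ Q ∧ 1 < B.length ∧ 1 ≤ d ∧ d ≤ k ∧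
      j₁ < j₂ ∧ j₂ < B.length ∧
      R = ((Ann.eq p d, a),
        (B.zipIdx.map Prod.swap).map fun x =>
          (if x.1 = j₁ ∨ x.1 = j₂ then Ann.eq x.2.1 (d - 1) else Ann.le x.2.1 (d - 1),
            x.2.2))) ∨
    -- (3) ε-rules
    (∃ p a d e, e ≤ d ∧ d ≤ k ∧ R = ((Ann.le p d, a), [(Ann.eq p e, a)])) }

/-- Erase the annotation of an annotated atom. -/
def eraseAtom {P A : Type} : GAtom (Ann P) A → GAtom P A
  | (.eq p _, a) => (p, a)
  | (.le p _, a) => (p, a)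

/-- Erase the annotations of an annotated rule. -/
def eraseRule {P A : Type} (r : GRule (Ann P) A) : GRule P A :=
  (eraseAtom r.1, r.2.map eraseAtom)

/-- A rule of `Q^{≤k}` is an ε-rule precisely when its head predicate carries a
`≤`-annotation. -/
def isEpsRule {P A : Type} (r : GRule (Ann P) A) : Bool :=
  match r.1.1 with
  | .le _ _ => true
  | .eq _ _ => false

/-- The erasure of a derivation tree of `Q^{≤k}`: an ε-rule node (recognisable by its
`≤`-annotated head, and having exactly one child) is replaced by the erasure of its
child; at every other node the annotations of the rule labelling it are erased and the
children are erased recursively, in order. -/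
def erase {P A : Type} : LTree (GRule (Ann P) A) → LTree (GRule P A)
  | .node r ts =>
    if h : isEpsRule r ∧ ts.length = 1 then
      erase (ts.head (by rcases h with ⟨-, h2⟩; exact List.ne_nil_of_length_pos (by omega)))
    else .node (eraseRule r) (ts.attach.map fun x => erase x.1)
termination_by t => sizeOf t
decreasing_by
  · simp_wf
    have := List.sizeOf_lt_of_mem (List.head_mem (l := ts)
      (by rcases h with ⟨-, h2⟩; exact List.ne_nil_of_length_pos (by omega)))
    omega
  · have := List.sizeOf_lt_of_mem x.2
    simp_wf
    omega

namespace List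

theorem foldr_max_eq_of_mem {l : List ℕ} {m : ℕ} (hm : m ∈ l) (hle : ∀ x ∈ l, x ≤ m) :
    l.foldr max 0 = m :=
  le_antisymm (max_le_of_forall_le l m hle) (le_max_of_le hm le_rfl)

theorem two_le_count_of_getElem_eq {α : Type*} [DecidableEq α] {l : List α} {i j : ℕ} {x : α}
    (hij : i < j) (hj : j < l.length) (hi_eq : l[i] = x) (hj_eq : l[j] = x) : 2 ≤ l.count x :=
  duplicate_iff_two_le_count.1 <| duplicate_iff_exists_distinct_get.2
    ⟨⟨i, hij.trans hj⟩, ⟨j, hj⟩, hij, hi_eq.symm, hj_eq.symm⟩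

theorem count_eq_one_of_getElem_eq {α : Type*} [DecidableEq α] {l : List α} {j : ℕ} {x : α}
    (hj : j < l.length) (hj_eq : l[j] = x) (hne : ∀ i (hi : i < l.length), i ≠ j → l[i] ≠ x) :
    l.count x = 1 := by
  have hpos : 0 < l.count x := count_pos_iff.2 (hj_eq ▸ getElem_mem hj)
  suffices ¬ 2 ≤ l.count x by omega
  rw [← duplicate_iff_two_le_count, duplicate_iff_exists_distinct_get]
  rintro ⟨⟨i₁, hi₁⟩, ⟨i₂, hi₂⟩, hlt, h₁, h₂⟩
  have hlt' : i₁ < i₂ := hlt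
  by_cases h : i₁ = j
  · exact hne i₂ hi₂ (by omega) h₂.symm
  · exact hne i₁ hi₁ h h₁.symm

theorem map_map_swap_zipIdx {α β : Type*} (f : ℕ × α → β) (l : List α) :
    (l.zipIdx.map Prod.swap).map f = l.mapIdx fun i a => f (i, a) := by
  rw [mapIdx_eq_zipIdx_map, map_map]
  rfl

theorem map_mapIdx_eq_self {α β : Type*} {l : List α} {f : ℕ → α → β} {g : β → α}
    (h : ∀ i a, g (f i a) = a) : (l.mapIdx f).map g = l :=
  ext_getElem (by simp) fun i _ _ => by simp [h]

theorem Forall₂.rel_mapIdx_getElem {α β γ : Type*} {R : β → γ → Prop} {l : List α}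
    {f : ℕ → α → β} {l' : List γ} (h : Forall₂ R (l.mapIdx f) l') (i : ℕ) (hi : i < l'.length) :
    R (f i (l[i]'(by simpa [← h.length_eq] using hi))) l'[i] := by
  simpa using h.get (by simpa [h.length_eq] using hi) hi

end List

namespace LTree

variable {L : Type}

theorem dim_node_s10 (l : L) (ts : List (LTree L)) :
    (node l ts).dim =
      if ts = [] then 0
      else
        let m := (ts.map dim).foldr max 0
        if (ts.map dim).count m = 1 then m else m + 1 := by
  rw [dim]
  simp only [List.attach_map_val, List.map_eq_nil_iff]

theorem dim_node_nil (l : L) : (node l []).dim = 0 := by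
  simp [dim_node_s10]

theorem dim_node_of_unique_max {l : L} {ts : List (LTree L)} {j : ℕ} (hj : j < ts.length)
    (hlt : ∀ i (hi : i < ts.length), i ≠ j → ts[i].dim < ts[j].dim) :
    (node l ts).dim = ts[j].dim := by
  have hmax : (ts.map dim).foldr max 0 = ts[j].dim :=
    List.foldr_max_eq_of_mem (List.mem_map_of_mem (List.getElem_mem hj)) <|
      List.forall_mem_map.2 fun t ht => by
        obtain ⟨i, hi, rfl⟩ := List.getElem_of_mem ht
        rcases eq_or_ne i j with rfl | hij
        · rfl
        · exact (hlt i hi hij).le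
  have hcount : (ts.map dim).count ts[j].dim = 1 :=
    List.count_eq_one_of_getElem_eq (by simpa using hj) (by simp)
      (fun i hi hij => by simpa using (hlt i (by simpa using hi) hij).ne)
  simp only [dim_node_s10, List.ne_nil_of_length_pos (by omega : 0 < ts.length), if_false, hmax,
    hcount, if_true]

theorem dim_node_of_two_max {l : L} {ts : List (LTree L)} {i j m : ℕ} (hij : i < j)
    (hj : j < ts.length) (hi_dim : ts[i].dim = m) (hj_dim : ts[j].dim = m)
    (hle : ∀ t ∈ ts, t.dim ≤ m) :
    (node l ts).dim = m + 1 := by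
  have hmax : (ts.map dim).foldr max 0 = m :=
    List.foldr_max_eq_of_mem (hj_dim ▸ List.mem_map_of_mem (List.getElem_mem hj))
      (by simpa using hle)
  have hcount : 2 ≤ (ts.map dim).count m :=
    List.two_le_count_of_getElem_eq hij (by simpa using hj) (by simpa using hi_dim)
      (by simpa using hj_dim)
  simp only [dim_node_s10, List.ne_nil_of_length_pos (by omega : 0 < ts.length), if_false, hmax]
  rw [if_neg (by omega)]

end LTree

@[elab_as_elim]
theorem IsDeriv.induction_on {P A : Type} {Q : Set (GRule P A)}
    {motive : GAtom P A → LTree (GRule P A) → Prop}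
    (node : ∀ r ts, r ∈ Q → List.Forall₂ (fun b t => IsDeriv Q b t ∧ motive b t) r.2 ts →
      motive r.1 (.node r ts))
    {h : GAtom P A} {T : LTree (GRule P A)} (hT : IsDeriv Q h T) : motive h T := by
  induction hT using IsDeriv.rec (motive_2 := fun bs ts _ =>
    List.Forall₂ (fun b t => IsDeriv Q b t ∧ motive b t) bs ts) with
  | node r ts hr _ ih => exact node r ts hr ih
  | nil => exact .nil
  | cons hd _ ihd ihl => exact .cons ⟨hd, ihd⟩ ihl

section Erasure

variable {P A : Type}

def Ann.AllowsDim : Ann P → ℕ → Prop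
  | .eq _ d, n => n = d
  | .le _ d, n => n ≤ d

theorem erase_node_of_not_isEpsRule {r : GRule (Ann P) A} (hr : isEpsRule r = false)
    (ts : List (LTree (GRule (Ann P) A))) :
    erase (.node r ts) = .node (eraseRule r) (ts.map erase) := by
  rw [erase]
  simp [hr]

theorem erase_node_singleton_of_isEpsRule {r : GRule (Ann P) A} (hr : isEpsRule r = true)
    (t : LTree (GRule (Ann P) A)) :
    erase (.node r [t]) = erase t := by
  rw [erase]
  simp [hr]

variable {Q : Set (GRule P A)} {k : ℕ} {r : GRule (Ann P) A}

theorem eraseRule_mem_of_mem_kdim (hr : r ∈ kdim Q k) (hε : isEpsRule r = false) :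
    eraseRule r ∈ Q := by
  rcases hr with ⟨p, a, hQ, rfl⟩ | ⟨p, a, q, b, d, -, hQ, rfl⟩ |
    ⟨p, a, B, d, j, hQ, -, -, -, -, rfl⟩ | ⟨p, a, B, d, j₁, j₂, hQ, -, -, -, -, -, rfl⟩ |
    ⟨p, a, d, e, -, -, rfl⟩
  · exact hQ
  · exact hQ
  iterate 2
    simp only [eraseRule, List.map_map_swap_zipIdx]
    rw [List.map_mapIdx_eq_self]
    · exact hQ
    · intro i b
      split_ifs <;> rfl
  · cases hε

theorem exists_eq_of_mem_kdim_of_isEpsRule (hr : r ∈ kdim Q k) (hε : isEpsRule r = true) :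
    ∃ p a d e, e ≤ d ∧ r = ((.le p d, a), [(.eq p e, a)]) := by
  rcases hr with ⟨p, a, -, rfl⟩ | ⟨p, a, q, b, d, -, -, rfl⟩ |
    ⟨p, a, B, d, j, -, -, -, -, -, rfl⟩ | ⟨p, a, B, d, j₁, j₂, -, -, -, -, -, -, rfl⟩ |
    ⟨p, a, d, e, hed, -, rfl⟩
  any_goals cases hε
  exact ⟨p, a, d, e, hed, rfl⟩

theorem allowsDim_dim_node_of_mem_kdim {L : Type} (l : L) (hr : r ∈ kdim Q k)
    (hε : isEpsRule r = false) {us : List (LTree L)}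
    (hus : List.Forall₂ (fun b u => b.1.AllowsDim u.dim) r.2 us) :
    r.1.1.AllowsDim (LTree.node l us).dim := by
  rcases hr with ⟨p, a, -, rfl⟩ | ⟨p, a, q, b, d, -, -, rfl⟩ |
    ⟨p, a, B, d, j, -, -, hd, -, hj, rfl⟩ | ⟨p, a, B, d, j₁, j₂, -, -, hd, -, hj₁₂, hj₂, rfl⟩ |
    ⟨p, a, d, e, -, -, rfl⟩
  · cases hus
    exact LTree.dim_node_nil l
  · rcases hus with _ | ⟨hu, ⟨⟩⟩
    exact (LTree.dim_node_of_unique_max (j := 0) (by simp) (by simp)).trans hu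
  · simp only [List.map_map_swap_zipIdx] at hus
    have hlen : B.length = us.length := by simpa using hus.length_eq
    have hdims := hus.rel_mapIdx_getElem
    have hjd : us[j].dim = d := by simpa [Ann.AllowsDim] using hdims j (by omega)
    have hlt : ∀ i (hi : i < us.length), i ≠ j → us[i].dim < us[j].dim := fun i hi hij => by
      have := hdims i hi
      simp only [hij, if_false, Ann.AllowsDim] at this
      omega
    exact (LTree.dim_node_of_unique_max (by omega) hlt).trans hjd
  · simp only [List.map_map_swap_zipIdx] at hus
    have hlen : B.length = us.length := by simpa using hus.length_eq
    have hdims := hus.rel_mapIdx_getElem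
    have hle : ∀ u ∈ us, u.dim ≤ d - 1 := fun u hu => by
      obtain ⟨i, hi, rfl⟩ := List.getElem_of_mem hu
      have := hdims i hi
      split_ifs at this <;> simp only [Ann.AllowsDim] at this <;> omega
    have h₁ : us[j₁].dim = d - 1 := by simpa [Ann.AllowsDim] using hdims j₁ (by omega)
    have h₂ : us[j₂].dim = d - 1 := by simpa [Ann.AllowsDim] using hdims j₂ (by omega)
    exact (LTree.dim_node_of_two_max hj₁₂ (by omega) h₁ h₂ hle).trans (Nat.sub_add_cancel hd)
  · cases hε

theorem isDeriv_erase_and_allowsDim {h : GAtom (Ann P) A} {T : LTree (GRule (Ann P) A)}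
    (hT : IsDeriv (kdim Q k) h T) :
    IsDeriv Q (eraseAtom h) (erase T) ∧ h.1.AllowsDim (erase T).dim := by
  refine IsDeriv.induction_on (fun r ts hr ih => ?_) hT
  cases hε : isEpsRule r
  · have hts : List.Forall₂ (fun b u => IsDeriv Q (eraseAtom b) u ∧ b.1.AllowsDim u.dim) r.2
        (ts.map erase) :=
      List.forall₂_map_right_iff.2 (ih.imp fun _ _ h => h.2)
    rw [erase_node_of_not_isEpsRule hε]
    exact ⟨.node _ _ (eraseRule_mem_of_mem_kdim hr hε)
        (List.forall₂_map_left_iff.2 (hts.imp fun _ _ h => h.1)),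
      allowsDim_dim_node_of_mem_kdim _ hr hε (hts.imp fun _ _ h => h.2)⟩
  · obtain ⟨p, a, d, e, hed, rfl⟩ := exists_eq_of_mem_kdim_of_isEpsRule hr hε
    rcases ih with _ | ⟨⟨-, hder, hdim⟩, ⟨⟩⟩
    rw [erase_node_singleton_of_isEpsRule hε]
    exact ⟨hder, hdim.trans_le hed⟩

end Erasure

/-- For every derivation tree `T` for an annotated atom `(p^{=d}, a)` in `Q^{≤k}`
(`0 ≤ d ≤ k`), the erasure of `T` is a derivation tree for `(p, a)` in `Q` of
dimension exactly `d`; and for every derivation tree `T` for `(p^{≤d}, a)` in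
`Q^{≤k}`, the erasure of `T` is a derivation tree for `(p, a)` in `Q` of dimension
at most `d`. -/
theorem erase_isDeriv {P A : Type} (Q : Set (GRule P A)) (k : ℕ) :
    (∀ (p : P) (a : A) (d : ℕ), d ≤ k →
      ∀ T : LTree (GRule (Ann P) A), IsDeriv (kdim Q k) (Ann.eq p d, a) T →
        IsDeriv Q (p, a) (erase T) ∧ (erase T).dim = d) ∧
    (∀ (p : P) (a : A) (d : ℕ), d ≤ k →
      ∀ T : LTree (GRule (Ann P) A), IsDeriv (kdim Q k) (Ann.le p d, a) T →
        IsDeriv Q (p, a) (erase T) ∧ (erase T).dim ≤ d) :=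
  ⟨fun _ _ _ _ _ hT => isDeriv_erase_and_allowsDim hT,
    fun _ _ _ _ _ hT => isDeriv_erase_and_allowsDim hT⟩
end
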